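/- arXiv:1211.5745 — 9 statements merged into one kernel-verified Lean document; each statement's English description precedes it below -/
import Mathlib

section
/- For all natural numbers m and n and all real x, H_{m,n}(x) = m!·n!·Σ_{k=0}^{min(m,n)} ((−1)^k / k!) · (x^{n−k} / (n−k)!) · (H_{m−k}(x) / (m−k)!), where H_j = H_{j,0} denotes the physicists' Hermite polynomial. -/
open Polynomial Finset

/-- The operator `A p = 2·X·p − p′`. -/
noncomputable def A (p : ℝ[X]) : ℝ[X] := 2 * X * p - derivative p

/-- The two-index Hermite polynomial `H_{m,n} = A^m (X^n)`. -/
noncomputable def H (m n : ℕ) : ℝ[X] := A^[m] (X ^ n)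

lemma A_X_mul (p : ℝ[X]) : A (X * p) = X * A p - p := by
  simp only [A, derivative_mul, derivative_X, one_mul]
  ring

lemma A_sub_C_mul (p q : ℝ[X]) (c : ℝ) : A (p - C c * q) = A p - C c * A q := by
  simp only [A, derivative_sub, derivative_mul, derivative_C, zero_mul, zero_add]
  ring

lemma iterA_X_mul (m : ℕ) (p : ℝ[X]) :
    A^[m+1] (X * p) = X * A^[m+1] p - C ((m : ℝ) + 1) * A^[m] p := by
  induction m generalizing p with
  | zero => simpa using A_X_mul p
  | succ m ih =>
    rw [Function.iterate_succ_apply' A (m+1) (X*p), ih p, A_sub_C_mul, A_X_mul,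
        ← Function.iterate_succ_apply' A (m+1) p, ← Function.iterate_succ_apply' A m p]
    simp only [Nat.cast_add, Nat.cast_one, C_add, C_1]
    ring

lemma H_rec (m n : ℕ) : H (m+1) (n+1) = X * H (m+1) n - C ((m : ℝ) + 1) * H m n := by
  have h : (X:ℝ[X]) ^ (n+1) = X * X ^ n := by ring
  rw [H, h, iterA_X_mul m (X ^ n)]
  rfl

lemma H_eval_rec (m n : ℕ) (x : ℝ) :
    (H (m+1) (n+1)).eval x = x * (H (m+1) n).eval x - ((m : ℝ) + 1) * (H m n).eval x := by
  rw [H_rec]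
  simp

lemma fact_ne (k : ℕ) : ((k.factorial : ℝ)) ≠ 0 := Nat.cast_ne_zero.mpr k.factorial_ne_zero

lemma step_id (p n i : ℕ) (hi : i + 1 ≤ n) (x h : ℝ) :
    x * (((p+1).factorial : ℝ) * (n.factorial : ℝ) *
        ((-1:ℝ)^(i+1) / ((i+1).factorial : ℝ) * (x^(n-(i+1)) / ((n-(i+1)).factorial : ℝ)) *
          (h / ((p+1-(i+1)).factorial : ℝ))))
      - ((p:ℝ)+1) * ((p.factorial : ℝ) * (n.factorial : ℝ) *
        ((-1:ℝ)^i / (i.factorial : ℝ) * (x^(n-i) / ((n-i).factorial : ℝ)) *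
          (h / ((p-i).factorial : ℝ))))
    = ((p+1).factorial : ℝ) * ((n+1).factorial : ℝ) *
        ((-1:ℝ)^(i+1) / ((i+1).factorial : ℝ) * (x^(n+1-(i+1)) / ((n+1-(i+1)).factorial : ℝ)) *
          (h / ((p+1-(i+1)).factorial : ℝ))) := by
  obtain ⟨a, rfl⟩ : ∃ a, n = a + (i+1) := ⟨n - (i+1), by omega⟩
  have e1 : a + (i+1) - (i+1) = a := by omega
  have e2 : a + (i+1) - i = a + 1 := by omega
  have e3 : a + (i+1) + 1 - (i+1) = a + 1 := by omega
  have e4 : p + 1 - (i+1) = p - i := by omega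
  rw [e1, e2, e3, e4]
  have f1 : ((a + (i+1) + 1).factorial : ℝ) = ((a:ℝ) + i + 2) * ((a + (i+1)).factorial : ℝ) := by
    rw [Nat.factorial_succ]; push_cast; ring
  have f2 : (((p+1).factorial : ℝ)) = ((p:ℝ)+1) * (p.factorial : ℝ) := by
    rw [Nat.factorial_succ]; push_cast; ring
  have f3 : (((i+1).factorial : ℝ)) = ((i:ℝ)+1) * (i.factorial : ℝ) := by
    rw [Nat.factorial_succ]; push_cast; ring
  have f4 : (((a+1).factorial : ℝ)) = ((a:ℝ)+1) * (a.factorial : ℝ) := by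
    rw [Nat.factorial_succ]; push_cast; ring
  rw [f1, f2, f3, f4]
  have g1 := fact_ne i
  have g2 := fact_ne a
  have g3 := fact_ne p
  have g4 := fact_ne (p - i)
  have g5 := fact_ne (a + (i+1))
  have hi1 : (i:ℝ) + 1 ≠ 0 := by positivity
  have ha1 : (a:ℝ) + 1 ≠ 0 := by positivity
  field_simp
  ring

lemma id0 (m n : ℕ) (x h : ℝ) :
    x * ((m.factorial : ℝ) * (n.factorial : ℝ) *
        ((-1:ℝ)^0 / ((Nat.factorial 0 : ℕ) : ℝ) * (x^(n-0) / ((n-0).factorial : ℝ)) *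
          (h / ((m-0).factorial : ℝ))))
    = (m.factorial : ℝ) * ((n+1).factorial : ℝ) *
        ((-1:ℝ)^0 / ((Nat.factorial 0 : ℕ) : ℝ) * (x^(n+1-0) / ((n+1-0).factorial : ℝ)) *
          (h / ((m-0).factorial : ℝ))) := by
  simp only [Nat.sub_zero, pow_zero, Nat.factorial_zero, Nat.cast_one]
  rw [Nat.factorial_succ, pow_succ]
  have := fact_ne n
  have hn1 : ((n:ℝ)+1) ≠ 0 := by positivity
  push_cast
  field_simp

lemma idlast (p n : ℕ) (x h : ℝ) :
    -(((p:ℝ)+1) * ((p.factorial : ℝ) * (n.factorial : ℝ) *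
        ((-1:ℝ)^n / (n.factorial : ℝ) * (x^(n-n) / ((n-n).factorial : ℝ)) *
          (h / ((p-n).factorial : ℝ)))))
    = ((p+1).factorial : ℝ) * ((n+1).factorial : ℝ) *
        ((-1:ℝ)^(n+1) / ((n+1).factorial : ℝ) * (x^(n+1-(n+1)) / ((n+1-(n+1)).factorial : ℝ)) *
          (h / ((p+1-(n+1)).factorial : ℝ))) := by
  have e1 : n - n = 0 := by omega
  have e2 : n + 1 - (n+1) = 0 := by omega
  have e3 : p + 1 - (n+1) = p - n := by omega
  rw [e1, e2, e3]
  rw [Nat.factorial_succ p, Nat.factorial_succ n, pow_succ]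
  have h1 := fact_ne n
  have h2 := fact_ne (p - n)
  have hn1 : ((n:ℝ)+1) ≠ 0 := by positivity
  push_cast
  field_simp
theorem hmn_expansion (m n : ℕ) (x : ℝ) :
    (H m n).eval x =
      (m.factorial : ℝ) * (n.factorial : ℝ) *
        ∑ k ∈ range (min m n + 1),
          ((-1 : ℝ) ^ k / (k.factorial : ℝ)) *
            (x ^ (n - k) / ((n - k).factorial : ℝ)) *
            ((H (m - k) 0).eval x / ((m - k).factorial : ℝ)) := by
  induction n generalizing m with
  | zero =>
    simp only [Nat.min_zero, zero_add, sum_range_one, Nat.sub_zero, pow_zero,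
      Nat.factorial_zero, Nat.cast_one]
    have := fact_ne m
    field_simp
  | succ n ih =>
    match m with
    | 0 =>
      simp only [Nat.zero_min, zero_add, sum_range_one, Nat.zero_sub, Nat.sub_zero, pow_zero,
        Nat.factorial_zero, Nat.cast_one]
      have h0 : (H 0 (n+1)).eval x = x ^ (n+1) := by simp [H]
      have h00 : (H 0 0).eval x = 1 := by simp [H]
      rw [h0, h00]
      have := fact_ne (n+1)
      field_simp
    | p + 1 =>
      rw [H_eval_rec p n x, ih (p+1), ih p]
      rcases le_or_gt (p+1) n with hc | hc
      · rw [Nat.min_eq_left (by omega : p+1 ≤ n+1), Nat.min_eq_left hc,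
          Nat.min_eq_left (by omega : p ≤ n)]
        rw [Finset.sum_range_succ' _ (p+1), Finset.sum_range_succ' _ (p+1)]
        have hs : x * (((p+1).factorial:ℝ) * (n.factorial:ℝ) *
              ∑ k ∈ Finset.range (p+1),
                (-1:ℝ)^(k+1) / ((k+1).factorial:ℝ) * (x^(n-(k+1)) / ((n-(k+1)).factorial:ℝ)) *
                  ((H (p+1-(k+1)) 0).eval x / ((p+1-(k+1)).factorial:ℝ)))
            - ((p:ℝ)+1) * ((p.factorial:ℝ) * (n.factorial:ℝ) *
              ∑ k ∈ Finset.range (p+1),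
                (-1:ℝ)^k / (k.factorial:ℝ) * (x^(n-k) / ((n-k).factorial:ℝ)) *
                  ((H (p-k) 0).eval x / ((p-k).factorial:ℝ)))
            = ((p+1).factorial:ℝ) * ((n+1).factorial:ℝ) *
              ∑ k ∈ Finset.range (p+1),
                (-1:ℝ)^(k+1) / ((k+1).factorial:ℝ) * (x^(n+1-(k+1)) / ((n+1-(k+1)).factorial:ℝ)) *
                  ((H (p+1-(k+1)) 0).eval x / ((p+1-(k+1)).factorial:ℝ)) := by
          simp only [Finset.mul_sum, ← Finset.sum_sub_distrib]
          refine Finset.sum_congr rfl fun k hk => ?_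
          have hk' : k + 1 ≤ n := by simp only [Finset.mem_range] at hk; omega
          have hH : (H (p+1-(k+1)) 0).eval x = (H (p-k) 0).eval x := by
            rw [show p+1-(k+1) = p-k from by omega]
          rw [hH]
          exact step_id p n k hk' x _
        linear_combination hs + id0 (p+1) n x ((H (p+1-0) 0).eval x)
      · rw [Nat.min_eq_right (by omega : n+1 ≤ p+1), Nat.min_eq_right (by omega : n ≤ p+1),
          Nat.min_eq_right (by omega : n ≤ p)]
        rw [Finset.sum_range_succ' _ (n+1), Finset.sum_range_succ (fun k => (-1:ℝ)^(k+1) / ((k+1).factorial:ℝ) * (x^(n+1-(k+1)) / ((n+1-(k+1)).factorial:ℝ)) * ((H (p+1-(k+1)) 0).eval x / ((p+1-(k+1)).factorial:ℝ))) n]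
        rw [Finset.sum_range_succ' _ n, Finset.sum_range_succ _ n]
        rw [show (H (p+1-(n+1)) 0).eval x = (H (p-n) 0).eval x from by
          rw [show p+1-(n+1) = p-n from by omega]]
        have hs : x * (((p+1).factorial:ℝ) * (n.factorial:ℝ) *
              ∑ k ∈ Finset.range n,
                (-1:ℝ)^(k+1) / ((k+1).factorial:ℝ) * (x^(n-(k+1)) / ((n-(k+1)).factorial:ℝ)) *
                  ((H (p+1-(k+1)) 0).eval x / ((p+1-(k+1)).factorial:ℝ)))
            - ((p:ℝ)+1) * ((p.factorial:ℝ) * (n.factorial:ℝ) *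
              ∑ k ∈ Finset.range n,
                (-1:ℝ)^k / (k.factorial:ℝ) * (x^(n-k) / ((n-k).factorial:ℝ)) *
                  ((H (p-k) 0).eval x / ((p-k).factorial:ℝ)))
            = ((p+1).factorial:ℝ) * ((n+1).factorial:ℝ) *
              ∑ k ∈ Finset.range n,
                (-1:ℝ)^(k+1) / ((k+1).factorial:ℝ) * (x^(n+1-(k+1)) / ((n+1-(k+1)).factorial:ℝ)) *
                  ((H (p+1-(k+1)) 0).eval x / ((p+1-(k+1)).factorial:ℝ)) := by
          simp only [Finset.mul_sum, ← Finset.sum_sub_distrib]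
          refine Finset.sum_congr rfl fun k hk => ?_
          have hk' : k + 1 ≤ n := by simp only [Finset.mem_range] at hk; omega
          have hH : (H (p+1-(k+1)) 0).eval x = (H (p-k) 0).eval x := by
            rw [show p+1-(k+1) = p-k from by omega]
          rw [hH]
          exact step_id p n k hk' x _
        linear_combination hs + id0 (p+1) n x ((H (p+1-0) 0).eval x) +
          idlast p n x ((H (p-n) 0).eval x)
end

section
/- (Rodrigues formula) For all natural numbers m and n and all real x, H_{m,n}(x) = (−1)^m · e^{x²} · (d^m/dx^m)(x^n · e^{−x²}), where the m-th derivative is the iterated derivative of the real function t ↦ t^n·e^{−t²} evaluated at x. -/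
open Polynomial Finset

/-! Differentiating `p(t) e^{-t²}` gives `-(A p)(t) e^{-t²}`, so `A` is, up to sign, the derivative
conjugated by the Gaussian weight; iterating this is the Rodrigues formula. -/

lemma hasDerivAt_eval_mul_exp_neg_sq (p : ℝ[X]) (t : ℝ) :
    HasDerivAt (fun t : ℝ => p.eval t * Real.exp (-t ^ 2))
      (-((A p).eval t * Real.exp (-t ^ 2))) t := by
  have hexp : HasDerivAt (fun t : ℝ => Real.exp (-t ^ 2)) (Real.exp (-t ^ 2) * -(2 * t)) t := by
    simpa using ((hasDerivAt_pow 2 t).fun_neg).exp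
  refine ((p.hasDerivAt t).fun_mul hexp).congr_deriv ?_
  simp only [A, eval_sub, eval_mul, eval_X, eval_ofNat]
  ring

lemma deriv_eval_mul_exp_neg_sq (p : ℝ[X]) :
    deriv (fun t : ℝ => p.eval t * Real.exp (-t ^ 2)) =
      fun t : ℝ => -((A p).eval t * Real.exp (-t ^ 2)) :=
  funext fun t => (hasDerivAt_eval_mul_exp_neg_sq p t).deriv

lemma iteratedDeriv_eval_mul_exp_neg_sq (m : ℕ) (p : ℝ[X]) (x : ℝ) :
    iteratedDeriv m (fun t : ℝ => p.eval t * Real.exp (-t ^ 2)) x =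
      (-1 : ℝ) ^ m * (A^[m] p).eval x * Real.exp (-x ^ 2) := by
  induction m generalizing p with
  | zero => simp
  | succ m ih =>
    rw [iteratedDeriv_succ', deriv_eval_mul_exp_neg_sq, iteratedDeriv_fun_neg, ih,
      Function.iterate_succ_apply]
    ring

theorem hmn_rodrigues (m n : ℕ) (x : ℝ) :
    (H m n).eval x =
      (-1 : ℝ) ^ m * Real.exp (x ^ 2) *
        iteratedDeriv m (fun t : ℝ => t ^ n * Real.exp (-t ^ 2)) x := by
  have hderiv := iteratedDeriv_eval_mul_exp_neg_sq m (X ^ n) x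
  simp only [eval_pow, eval_X] at hderiv
  rw [hderiv, H]
  set P := (A^[m] (X ^ n)).eval x
  have hsign : (-1 : ℝ) ^ m * (-1) ^ m = 1 := by rw [← mul_pow, neg_one_mul, neg_neg, one_pow]
  have hexp : Real.exp (x ^ 2) * Real.exp (-x ^ 2) = 1 := by
    rw [← Real.exp_add, add_neg_cancel, Real.exp_zero]
  linear_combination -(P * Real.exp (x ^ 2) * Real.exp (-x ^ 2)) * hsign - P * hexp
end

section
/- (First recurrence) For all natural numbers m and n and all real x, H_{m,n}′(x) + H_{m+1,n}(x) − 2x·H_{m,n}(x) = 0, where H_{m,n}′ denotes the derivative of the polynomial H_{m,n}. -/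
open Polynomial Finset

theorem hmn_rec_one (m n : ℕ) (x : ℝ) :
    (derivative (H m n)).eval x + (H (m + 1) n).eval x - 2 * x * (H m n).eval x = 0 := by
  have : H (m + 1) n = 2 * X * H m n - derivative (H m n) := by
    simp [H, Function.iterate_succ_apply', A]
  rw [this]
  simp
end

section
/- (Second recurrence) For all natural numbers m ≥ 1 and n ≥ 1 and all real x, H_{m,n}(x) + n·H_{m−1,n−1}(x) − 2·H_{m−1,n+1}(x) = 0. -/
open Polynomial Finset

lemma A_add (p q : ℝ[X]) : A (p + q) = A p + A q := by
  simp [A]; ring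

lemma A_smul (c : ℝ) (p : ℝ[X]) : A (c • p) = c • A p := by
  simp [A, smul_sub]

lemma A_iter_comb (k : ℕ) (a b : ℝ) (p q : ℝ[X]) :
    A^[k] (a • p + b • q) = a • A^[k] p + b • A^[k] q := by
  induction k generalizing p q with
  | zero => simp
  | succ k ih =>
    rw [Function.iterate_succ_apply, Function.iterate_succ_apply,
      Function.iterate_succ_apply, A_add, A_smul, A_smul, ih]

lemma A_pow (n : ℕ) (hn : 1 ≤ n) :
    A (X ^ n) = (2 : ℝ) • X ^ (n + 1) + (-(n : ℝ)) • X ^ (n - 1) := by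
  simp [A, derivative_X_pow]
  obtain ⟨k, rfl⟩ := Nat.exists_eq_add_of_le hn
  simp [A, derivative_X_pow, smul_eq_C_mul, map_ofNat, pow_succ, pow_add]
  ring

theorem hmn_rec_two (m n : ℕ) (hm : 1 ≤ m) (hn : 1 ≤ n) (x : ℝ) :
    (H m n).eval x + (n : ℝ) * (H (m - 1) (n - 1)).eval x
      - 2 * (H (m - 1) (n + 1)).eval x = 0 := by
  obtain ⟨k, rfl⟩ := Nat.exists_eq_add_of_le hm
  have : H (1 + k) n = (2:ℝ) • H k (n+1) + (-(n:ℝ)) • H k (n-1) := by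
    unfold H
    rw [add_comm 1 k, Function.iterate_succ_apply, A_pow n hn, A_iter_comb]
  simp only [Nat.add_sub_cancel_left, this, eval_add, eval_smul, smul_eq_mul]
  ring
end

section
/- (Fourth recurrence) For all natural numbers m ≥ 1 and n ≥ 1 and all real x, (m − n)·H_{m−1,n−1}(x) + 2·H_{m−1,n+1}(x) − x·H_{m,n−1}(x) = 0 (here m − n is taken as an integer). -/
open Polynomial Finset

lemma A_sub (p q : ℝ[X]) : A (p - q) = A p - A q := by
  unfold A; rw [derivative_sub]; ring

lemma A_C_mul (c : ℝ) (p : ℝ[X]) : A (C c * p) = C c * A p := by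
  unfold A; rw [derivative_C_mul]; ring

lemma A_iter_C_mul (m : ℕ) (c : ℝ) (p : ℝ[X]) :
    A^[m] (C c * p) = C c * A^[m] p := by
  induction m with
  | zero => simp
  | succ k ih => rw [Function.iterate_succ_apply', ih, A_C_mul,
      Function.iterate_succ_apply']

lemma A_iter_X_mul (m : ℕ) (p : ℝ[X]) :
    A^[m] (X * p) = X * A^[m] p - C (m : ℝ) * A^[m - 1] p := by
  induction m with
  | zero => simp
  | succ k ih =>
    rw [Function.iterate_succ_apply', ih, A_sub, A_C_mul, A_X_mul]
    cases k with
    | zero => simp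
    | succ j =>
      simp only [Nat.add_sub_cancel, ← Function.iterate_succ_apply' A]
      simp only [Nat.cast_add, Nat.cast_one, map_add, map_one]
      ring

lemma deriv_A (p : ℝ[X]) : derivative (A p) = A (derivative p) + 2 * p := by
  unfold A; rw [derivative_sub, derivative_mul, derivative_mul]; simp; ring

lemma deriv_A_iter (m : ℕ) (p : ℝ[X]) :
    derivative (A^[m] p) = A^[m] (derivative p) + C (2 * (m : ℝ)) * A^[m - 1] p := by
  induction m with
  | zero => simp
  | succ k ih =>
    rw [Function.iterate_succ_apply', deriv_A, ih, A_add, A_C_mul]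
    cases k with
    | zero => simp [map_ofNat]
    | succ j =>
      simp only [Nat.add_sub_cancel, ← Function.iterate_succ_apply' A]
      simp only [Nat.cast_add, Nat.cast_one, map_add, map_one, map_mul, map_ofNat]
      ring

lemma key (a b : ℕ) :
    C ((a : ℝ) - b) * H a b + 2 * H a (b + 2) - X * H (a + 1) b = 0 := by
  unfold H
  have hb1 : (X : ℝ[X]) ^ (b + 1) = X * X ^ b := by ring
  have hb2 : (X : ℝ[X]) ^ (b + 2) = X * X ^ (b + 1) := by ring
  have h1 := A_iter_X_mul (a + 1) ((X : ℝ[X]) ^ b)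
  have h2 := deriv_A_iter a ((X : ℝ[X]) ^ (b + 1))
  have h3 := A_iter_X_mul a ((X : ℝ[X]) ^ (b + 1))
  have h4 : A^[a+1] ((X:ℝ[X]) ^ (b+1))
      = 2 * X * A^[a] ((X:ℝ[X])^(b+1)) - derivative (A^[a] ((X:ℝ[X])^(b+1))) := by
    rw [Function.iterate_succ_apply']; rfl
  rw [derivative_X_pow, A_iter_C_mul] at h2
  rw [← hb1] at h1
  rw [← hb2] at h3
  simp only [Nat.add_sub_cancel, Nat.cast_add, Nat.cast_one, map_add, map_one,
    map_mul, map_sub, map_ofNat] at h1 h2 h3 h4 ⊢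
  linear_combination 2 * h3 + h1 - h4 + h2

theorem hmn_rec_four (m n : ℕ) (hm : 1 ≤ m) (hn : 1 ≤ n) (x : ℝ) :
    ((m : ℤ) - (n : ℤ) : ℤ) * (H (m - 1) (n - 1)).eval x
      + 2 * (H (m - 1) (n + 1)).eval x - x * (H m (n - 1)).eval x = 0 := by
  obtain ⟨a, rfl⟩ : ∃ a, m = a + 1 := ⟨m - 1, (Nat.succ_pred_eq_of_pos hm).symm⟩
  obtain ⟨b, rfl⟩ : ∃ b, n = b + 1 := ⟨n - 1, (Nat.succ_pred_eq_of_pos hn).symm⟩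
  simp only [Nat.add_sub_cancel]
  have := congrArg (Polynomial.eval x) (key a b)
  simp only [eval_add, eval_sub, eval_mul, eval_C, eval_X, eval_zero,
    eval_ofNat] at this
  push_cast
  linarith [this]
end

section
/- (Runge-type addition formula) For all natural numbers m and n and all real x and y, H_{m,n}(x+y) = m!·n!·(1/√2)^{m+n} · Σ_{k=0}^{m} Σ_{j=0}^{n} (H_{k,j}(√2·x) / (k!·j!)) · (H_{m−k,n−j}(√2·y) / ((m−k)!·(n−j)!)). -/
/-!
Let `A₀, A₁` be the operator `A` acting in the variables `u = X 0`, `v = X 1` of `ℝ[u, v]`.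
They commute, and since `(1/√2, 1/√2)` is a unit vector, `(A₀ + A₁)/√2` acts on polynomials in
`w = (u + v)/√2` exactly as `A` acts in `w`: the raising operator `2x - d/dx` is invariant under
rotations of the variables. Hence `H_{m,n}(w) = ((A₀ + A₁)/√2)^m w^n`, and expanding both
binomials gives `2^{-(m+n)/2} ∑ C(m,k) C(n,j) H_{k,j}(u) H_{m-k,n-j}(v)`. Evaluating at
`u = √2 x`, `v = √2 y` yields the formula.
-/

open Polynomial Finset

open Real

namespace MvPolynomial

variable {R σ : Type*} [CommRing R]

theorem pderiv_pderiv_X (i j k : σ) : pderiv i (pderiv j (X k : MvPolynomial σ R)) = 0 := by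
  classical
  rw [pderiv_X, Pi.single_apply]
  split_ifs <;> simp

theorem pderiv_pderiv_comm (i j : σ) (p : MvPolynomial σ R) :
    pderiv i (pderiv j p) = pderiv j (pderiv i p) := by
  induction p using MvPolynomial.induction_on with
  | C a => simp
  | add p q hp hq => simp only [map_add, hp, hq]
  | mul_X p k hp =>
    simp only [Derivation.leibniz, map_add, smul_eq_mul, pderiv_pderiv_X, hp]
    ring

end MvPolynomial

open MvPolynomial (pderiv)

section

variable {R σ : Type*} [CommRing R]

noncomputable def mvA (i : σ) : Module.End R (MvPolynomial σ R) :=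
  LinearMap.mulLeft R (2 * MvPolynomial.X i) - (pderiv i).toLinearMap

theorem mvA_apply (i : σ) (f : MvPolynomial σ R) :
    mvA i f = 2 * MvPolynomial.X i * f - pderiv i f := rfl

theorem commute_mvA (i j : σ) : Commute (mvA (R := R) i) (mvA j) := by
  classical
  have pderiv_two (k : σ) : pderiv k (2 : MvPolynomial σ R) = 0 := by
    simpa using (pderiv k).map_natCast 2
  refine LinearMap.ext fun f => ?_
  simp only [Module.End.mul_apply, mvA_apply, map_sub, Derivation.leibniz, smul_eq_mul,
    MvPolynomial.pderiv_X, MvPolynomial.pderiv_pderiv_comm i j, pderiv_two]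
  rw [Pi.single_comm i 1 j]
  ring

theorem mvA_mul_of_pderiv_eq_zero {i : σ} {g : MvPolynomial σ R} (hg : pderiv i g = 0)
    (f : MvPolynomial σ R) : mvA i (g * f) = g * mvA i f := by
  simp only [mvA_apply, Derivation.leibniz, hg, smul_eq_mul]
  ring

theorem mvA_pow_mul_of_pderiv_eq_zero {i : σ} {g : MvPolynomial σ R} (hg : pderiv i g = 0)
    (k : ℕ) (f : MvPolynomial σ R) : (mvA i ^ k) (g * f) = g * (mvA i ^ k) f := by
  induction k with
  | zero => rfl
  | succ k ih => rw [pow_succ', Module.End.mul_apply, ih, mvA_mul_of_pderiv_eq_zero hg]; rfl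

theorem pderiv_aeval_X_of_ne {i j : σ} (h : j ≠ i) (p : R[X]) :
    pderiv i (aeval (MvPolynomial.X j : MvPolynomial σ R) p) = 0 := by
  rw [Derivation.map_aeval, MvPolynomial.pderiv_X_of_ne h, smul_zero]

end

section

variable {σ : Type*}

theorem sum_smul_mvA_aeval [Fintype σ] (c : σ → ℝ) (hc : ∑ i, c i ^ 2 = 1)
    (p : ℝ[X]) :
    (∑ i, c i • mvA (R := ℝ) i) (aeval (∑ i, c i • MvPolynomial.X i) p) =
      aeval (∑ i, c i • MvPolynomial.X i) (A p) := by
  classical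
  set w : MvPolynomial σ ℝ := ∑ i, c i • MvPolynomial.X i
  have pderiv_w (i : σ) : pderiv i w = MvPolynomial.C (c i) := by
    simp [w, MvPolynomial.pderiv_X, Pi.single_apply, MvPolynomial.smul_eq_C_mul]
  simp only [LinearMap.sum_apply, LinearMap.smul_apply, mvA_apply,
    Derivation.map_aeval, pderiv_w, A, map_sub, map_mul, aeval_X, map_ofNat, smul_eq_mul]
  calc _ = 2 * w * aeval w p - MvPolynomial.C (∑ i, c i ^ 2) * aeval w (derivative p) := by
        simp only [w, MvPolynomial.smul_eq_C_mul, map_sum, map_pow, Finset.mul_sum,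
          Finset.sum_mul, ← Finset.sum_sub_distrib]
        exact Finset.sum_congr rfl fun i _ => by ring
    _ = _ := by rw [hc, map_one, one_mul]

theorem sum_smul_mvA_pow_aeval [Fintype σ] (c : σ → ℝ) (hc : ∑ i, c i ^ 2 = 1)
    (m : ℕ) (p : ℝ[X]) :
    ((∑ i, c i • mvA (R := ℝ) i) ^ m) (aeval (∑ i, c i • MvPolynomial.X i) p) =
      aeval (∑ i, c i • MvPolynomial.X i) (A^[m] p) := by
  induction m with
  | zero => rfl
  | succ m ih =>
    rw [pow_succ', Module.End.mul_apply, ih, sum_smul_mvA_aeval c hc,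
      Function.iterate_succ_apply']

theorem mvA_aeval_X (i : σ) (p : ℝ[X]) :
    mvA i (aeval (MvPolynomial.X i : MvPolynomial σ ℝ) p) = aeval (MvPolynomial.X i) (A p) := by
  simp only [mvA_apply, Derivation.map_aeval, MvPolynomial.pderiv_X_self, smul_eq_mul, mul_one,
    A, map_sub, map_mul, aeval_X, map_ofNat]

theorem mvA_pow_aeval_X (i : σ) (k : ℕ) (p : ℝ[X]) :
    (mvA i ^ k) (aeval (MvPolynomial.X i : MvPolynomial σ ℝ) p) =
      aeval (MvPolynomial.X i) (A^[k] p) := by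
  induction k with
  | zero => rfl
  | succ k ih => rw [pow_succ', Module.End.mul_apply, ih, mvA_aeval_X, Function.iterate_succ_apply']

theorem mvA_pow_mul_mvA_pow_aeval_mul_aeval {i j : σ} (hij : i ≠ j) (k l : ℕ) (p q : ℝ[X]) :
    (mvA i ^ k * mvA j ^ l : Module.End ℝ (MvPolynomial σ ℝ))
        (aeval (MvPolynomial.X i : MvPolynomial σ ℝ) p * aeval (MvPolynomial.X j) q) =
      aeval (MvPolynomial.X i) (A^[k] p) * aeval (MvPolynomial.X j) (A^[l] q) := by
  rw [Module.End.mul_apply, mvA_pow_mul_of_pderiv_eq_zero (pderiv_aeval_X_of_ne hij _),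
    mvA_pow_aeval_X, mul_comm, mvA_pow_mul_of_pderiv_eq_zero (pderiv_aeval_X_of_ne hij.symm _),
    mvA_pow_aeval_X, mul_comm]

end

theorem aeval_diag_H_eq_sum (m n : ℕ) :
    aeval ((√2)⁻¹ • (MvPolynomial.X 0 + MvPolynomial.X 1) : MvPolynomial (Fin 2) ℝ) (H m n) =
      (√2)⁻¹ ^ (m + n) • ∑ k ∈ range (m + 1), ∑ j ∈ range (n + 1),
        (m.choose k * n.choose j) •
          (aeval (MvPolynomial.X 0) (H k j) * aeval (MvPolynomial.X 1) (H (m - k) (n - j))) := by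
  set c : Fin 2 → ℝ := fun _ => (√2)⁻¹
  have hc : ∑ i, c i ^ 2 = 1 := by
    simp only [c, Fin.sum_univ_two, inv_pow, Real.sq_sqrt zero_le_two]; norm_num
  have hw : ∑ i, c i • MvPolynomial.X i =
      (√2)⁻¹ • (MvPolynomial.X 0 + MvPolynomial.X 1 : MvPolynomial (Fin 2) ℝ) := by
    simp only [c, Fin.sum_univ_two, smul_add]
  have hop : ∑ i, c i • mvA i =
      (√2)⁻¹ • (mvA 0 + mvA 1 : Module.End ℝ (MvPolynomial (Fin 2) ℝ)) := by
    simp only [c, Fin.sum_univ_two, smul_add]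
  have hraise := sum_smul_mvA_pow_aeval c hc m (X ^ n)
  rw [hw, hop] at hraise
  rw [H, ← hraise, aeval_X_pow, _root_.smul_pow, _root_.smul_pow, (commute_mvA 0 1).add_pow,
    add_pow, pow_add, mul_smul, LinearMap.smul_apply, map_smul]
  congr 2
  simp only [LinearMap.sum_apply, map_sum]
  rw [Finset.sum_comm]
  refine sum_congr rfl fun k _ => sum_congr rfl fun j _ => ?_
  rw [Module.End.mul_apply, Module.End.natCast_apply, mul_comm _ (n.choose j : MvPolynomial _ ℝ),
    ← nsmul_eq_mul, map_nsmul, map_nsmul, smul_smul,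
    ← aeval_X_pow (R := ℝ) (MvPolynomial.X 0), ← aeval_X_pow (R := ℝ) (MvPolynomial.X 1),
    mvA_pow_mul_mvA_pow_aeval_mul_aeval (by decide)]
  rfl

theorem eval_H_add_eq_sum_choose (m n : ℕ) (x y : ℝ) :
    (H m n).eval (x + y) =
      (√2)⁻¹ ^ (m + n) * ∑ k ∈ range (m + 1), ∑ j ∈ range (n + 1),
        (m.choose k * n.choose j : ℝ) * (H k j).eval (√2 * x) *
          (H (m - k) (n - j)).eval (√2 * y) := by
  have hpoint : (√2)⁻¹ • (√2 * x + √2 * y) = x + y := by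
    rw [smul_eq_mul, ← mul_add, inv_mul_cancel_left₀ (by positivity)]
  have hexpand := congrArg (MvPolynomial.aeval ![√2 * x, √2 * y]) (aeval_diag_H_eq_sum m n)
  simp only [← aeval_algHom_apply, map_smul, map_sum, map_nsmul, map_mul, map_add,
    MvPolynomial.aeval_X, Matrix.cons_val_zero, Matrix.cons_val_one, coe_aeval_eq_eval,
    hpoint] at hexpand
  simp only [hexpand, smul_eq_mul, nsmul_eq_mul, Nat.cast_mul, mul_assoc]

theorem hmn_addition (m n : ℕ) (x y : ℝ) :
    (H m n).eval (x + y) =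
      (m.factorial : ℝ) * (n.factorial : ℝ) * (1 / Real.sqrt 2) ^ (m + n) *
        ∑ k ∈ range (m + 1), ∑ j ∈ range (n + 1),
          ((H k j).eval (Real.sqrt 2 * x) / ((k.factorial : ℝ) * (j.factorial : ℝ))) *
            ((H (m - k) (n - j)).eval (Real.sqrt 2 * y) /
              (((m - k).factorial : ℝ) * ((n - j).factorial : ℝ))) := by
  rw [eval_H_add_eq_sum_choose, one_div, mul_comm _ ((√2)⁻¹ ^ _), mul_assoc]
  congr 1
  rw [Finset.mul_sum]
  refine sum_congr rfl fun k hk => ?_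
  rw [Finset.mul_sum]
  refine sum_congr rfl fun j hj => ?_
  rw [Nat.cast_choose ℝ (Nat.le_of_lt_succ (mem_range.1 hk)),
    Nat.cast_choose ℝ (Nat.le_of_lt_succ (mem_range.1 hj))]
  field_simp
end

section
/- (Generating function) For all real x, u, v, the family ((m,n) ↦ H_{m,n}(x)·u^m·v^n/(m!·n!)) indexed by ℕ × ℕ is summable, and its sum equals exp(−u² + (2u+v)·x − u·v). -/
open Polynomial Finset

/-!
Let `D_e p = exp(-e x²) · (exp(e x²) · p)′ = p′ + 2e x p` be the twisted derivative, so that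
`A = -D_{-1}`. Taylor's theorem for the entire function `w ↦ exp(e w²) p(w)` at `x` gives
`∑ₘ (D_e^m p)(x) u^m / m! = exp(e (x + u)² - e x²) p(x + u)`. For `e = -1` and `p = Xⁿ` this
sums the `n`-th column of the double series to `exp(2ux - u²) ((x - u) v)ⁿ / n!`, and summing
over `n` gives the exponential.

The double series converges absolutely: the coefficients of `D_{-1}^m Xⁿ` are bounded in absolute
value by those of `D_1^m Xⁿ`, and the double series of the latter at `|x|, |u|, |v|` is summed by
the same Taylor argument.
-/

theorem hasSum_prod_of_norm_le_of_hasSum_fibres {ι κ E : Type*} [NormedAddCommGroup E]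
    [CompleteSpace E] {f : ι × κ → E} {g : ι × κ → ℝ} {a : κ → E} {b : κ → ℝ} {s : E}
    (hfg : ∀ p, ‖f p‖ ≤ g p) (hg : ∀ k, HasSum (fun i => g (i, k)) (b k)) (hb : Summable b)
    (hf : ∀ k, HasSum (fun i => f (i, k)) (a k)) (ha : HasSum a s) : HasSum f s := by
  rw [← (Equiv.prodComm κ ι).hasSum_iff, Equiv.coe_prodComm]
  have hg_swap : Summable (g ∘ Prod.swap) := by
    refine (summable_prod_of_nonneg fun p => (norm_nonneg _).trans (hfg _)).2
      ⟨fun k => (hg k).summable, ?_⟩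
    simpa only [Function.comp_apply, Prod.swap_prod_mk, (hg _).tsum_eq] using hb
  have hf_swap : Summable (f ∘ Prod.swap) := hg_swap.of_norm_bounded fun p => hfg _
  rw [← (hf_swap.hasSum.prod_fiberwise hf).unique ha]
  exact hf_swap.hasSum

theorem Polynomial.abs_eval_le_eval_abs_of_abs_coeff_le {p q : ℝ[X]}
    (h : ∀ i, |p.coeff i| ≤ q.coeff i) (x : ℝ) : |p.eval x| ≤ q.eval |x| := by
  have hdeg : p.natDegree < q.natDegree + 1 := by
    refine Nat.lt_succ_of_le (natDegree_le_iff_coeff_eq_zero.2 fun i hi => ?_)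
    simpa [coeff_eq_zero_of_natDegree_lt hi] using h i
  rw [eval_eq_sum_range' hdeg, eval_eq_sum_range' (Nat.lt_succ_self _)]
  refine (abs_sum_le_sum_abs _ _).trans (sum_le_sum fun i _ => ?_)
  rw [abs_mul, abs_pow]
  exact mul_le_mul_of_nonneg_right (h i) (by positivity)

namespace TwoIndexHermite

noncomputable def twistDeriv (e : ℝ) : ℝ[X] →ₗ[ℝ] ℝ[X] :=
  derivative + (2 * e) • LinearMap.mulLeft ℝ X

lemma twistDeriv_apply (e : ℝ) (p : ℝ[X]) :
    twistDeriv e p = derivative p + (2 * e) • (X * p) := rfl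

lemma coeff_twistDeriv_zero (e : ℝ) (p : ℝ[X]) : (twistDeriv e p).coeff 0 = p.coeff 1 := by
  simp [twistDeriv_apply, coeff_derivative]

lemma coeff_twistDeriv_succ (e : ℝ) (p : ℝ[X]) (i : ℕ) :
    (twistDeriv e p).coeff (i + 1) = p.coeff (i + 2) * (i + 2) + 2 * e * p.coeff i := by
  simp only [twistDeriv_apply, coeff_add, coeff_derivative, coeff_smul, coeff_X_mul, smul_eq_mul]
  push_cast
  ring

lemma abs_coeff_twistDeriv_le {e : ℝ} {p q : ℝ[X]} (h : ∀ i, |p.coeff i| ≤ q.coeff i)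
    (i : ℕ) : |(twistDeriv e p).coeff i| ≤ (twistDeriv |e| q).coeff i := by
  cases i with
  | zero => simpa only [coeff_twistDeriv_zero] using h 1
  | succ i =>
    rw [coeff_twistDeriv_succ, coeff_twistDeriv_succ]
    calc _ ≤ |p.coeff (i + 2)| * (i + 2) + 2 * |e| * |p.coeff i| := by
          refine (abs_add_le _ _).trans_eq ?_
          have hi : (0 : ℝ) ≤ i + 2 := by positivity
          rw [abs_mul, abs_mul, abs_mul, abs_two, abs_of_nonneg hi]
      _ ≤ _ := by gcongr <;> exact h _

lemma abs_coeff_iterate_twistDeriv_le {e : ℝ} {p q : ℝ[X]} (h : ∀ i, |p.coeff i| ≤ q.coeff i)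
    (m i : ℕ) : |((twistDeriv e)^[m] p).coeff i| ≤ ((twistDeriv |e|)^[m] q).coeff i := by
  induction m generalizing i with
  | zero => exact h i
  | succ m ih =>
    rw [Function.iterate_succ_apply', Function.iterate_succ_apply']
    exact abs_coeff_twistDeriv_le ih i

lemma hasDerivAt_cexp_mul_aeval (e : ℝ) (p : ℝ[X]) (z : ℂ) :
    HasDerivAt (fun w : ℂ => Complex.exp (e * w ^ 2) * aeval w p)
      (Complex.exp (e * z ^ 2) * aeval z (twistDeriv e p)) z := by
  have hsq : HasDerivAt (fun w : ℂ => (e : ℂ) * w ^ 2) (e * (2 * z)) z := by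
    simpa using (hasDerivAt_pow 2 z).const_mul (e : ℂ)
  refine (hsq.cexp.mul (p.hasDerivAt_aeval z)).congr_deriv ?_
  simp only [twistDeriv_apply, map_add, map_smul, map_mul, aeval_X, Complex.real_smul]
  push_cast
  ring

lemma iteratedDeriv_cexp_mul_aeval (e : ℝ) (m : ℕ) (p : ℝ[X]) :
    iteratedDeriv m (fun w : ℂ => Complex.exp (e * w ^ 2) * aeval w p) =
      fun w => Complex.exp (e * w ^ 2) * aeval w ((twistDeriv e)^[m] p) := by
  induction m generalizing p with
  | zero => rfl
  | succ m ih =>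
    rw [iteratedDeriv_succ', Function.iterate_succ_apply, ← ih]
    congr 1
    funext z
    exact (hasDerivAt_cexp_mul_aeval e p z).deriv

lemma hasSum_eval_iterate_twistDeriv (e x u : ℝ) (p : ℝ[X]) :
    HasSum (fun m => ((twistDeriv e)^[m] p).eval x * u ^ m / m.factorial)
      (Real.exp (e * (x + u) ^ 2 - e * x ^ 2) * p.eval (x + u)) := by
  have hf : Differentiable ℂ (fun w : ℂ => Complex.exp (e * w ^ 2) * aeval w p) :=
    fun z => (hasDerivAt_cexp_mul_aeval e p z).differentiableAt
  have taylor := Complex.hasSum_taylorSeries_of_entire hf x (x + u : ℝ)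
  simp only [iteratedDeriv_cexp_mul_aeval, smul_eq_mul] at taylor
  have hvalue :
      Real.exp (e * x ^ 2) * (Real.exp (e * (x + u) ^ 2 - e * x ^ 2) * p.eval (x + u)) =
        Real.exp (e * (x + u) ^ 2) * p.eval (x + u) := by
    rw [Real.exp_sub]
    field_simp
  rw [← hasSum_mul_left_iff (Real.exp_pos (e * x ^ 2)).ne', hvalue, ← Complex.hasSum_ofReal]
  have hev (q : ℝ[X]) (y : ℝ) : aeval (y : ℂ) q = ((q.eval y : ℝ) : ℂ) := (ofReal_eval q y).symm
  simp only [hev] at taylor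
  push_cast at taylor ⊢
  refine taylor.congr_fun fun m => ?_
  ring

lemma A_eq_neg_twistDeriv : A = ⇑(-twistDeriv (-1)) := by
  funext p
  simp only [A, LinearMap.neg_apply, twistDeriv_apply, smul_eq_C_mul, map_mul, map_neg, C_ofNat,
    map_one]
  ring

lemma iterate_A (m : ℕ) (p : ℝ[X]) : A^[m] p = (-1 : ℝ) ^ m • (twistDeriv (-1))^[m] p := by
  rw [A_eq_neg_twistDeriv, ← Module.End.coe_pow, ← neg_one_smul ℝ (twistDeriv _),
    _root_.smul_pow, LinearMap.smul_apply, Module.End.coe_pow]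

lemma hasSum_eval_iterate_A (x u : ℝ) (p : ℝ[X]) :
    HasSum (fun m => (A^[m] p).eval x * u ^ m / m.factorial)
      (Real.exp (2 * u * x - u ^ 2) * p.eval (x - u)) := by
  have h := hasSum_eval_iterate_twistDeriv (-1) x (-u) p
  rw [show -1 * (x + -u) ^ 2 - -1 * x ^ 2 = 2 * u * x - u ^ 2 by ring, ← sub_eq_add_neg] at h
  refine h.congr_fun fun m => ?_
  rw [iterate_A, eval_smul, smul_eq_mul, neg_pow u]
  ring

lemma abs_eval_H_le (m n : ℕ) (x : ℝ) :
    |(H m n).eval x| ≤ ((twistDeriv 1)^[m] (X ^ n)).eval |x| := by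
  have hXn (i : ℕ) : |(X ^ n : ℝ[X]).coeff i| ≤ (X ^ n : ℝ[X]).coeff i := by
    rw [coeff_X_pow]; split_ifs <;> simp
  have h := abs_eval_le_eval_abs_of_abs_coeff_le
    (abs_coeff_iterate_twistDeriv_le (e := -1) hXn m) x
  rw [abs_neg, abs_one] at h
  rwa [H, iterate_A, eval_smul, smul_eq_mul, abs_mul, abs_pow, abs_neg, abs_one, one_pow, one_mul]

noncomputable def hermiteTerm (x u v : ℝ) (p : ℕ × ℕ) : ℝ :=
  (H p.1 p.2).eval x * u ^ p.1 * v ^ p.2 / (p.1.factorial * p.2.factorial)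

noncomputable def majorantTerm (x u v : ℝ) (p : ℕ × ℕ) : ℝ :=
  ((twistDeriv 1)^[p.1] (X ^ p.2)).eval |x| * |u| ^ p.1 * |v| ^ p.2 /
    (p.1.factorial * p.2.factorial)

lemma norm_hermiteTerm_le (x u v : ℝ) (p : ℕ × ℕ) :
    ‖hermiteTerm x u v p‖ ≤ majorantTerm x u v p := by
  simp only [hermiteTerm, majorantTerm, Real.norm_eq_abs, abs_div, abs_mul, abs_pow, Nat.abs_cast]
  gcongr
  exact abs_eval_H_le p.1 p.2 x

lemma hasSum_hermiteTerm_fibre (x u v : ℝ) (n : ℕ) :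
    HasSum (fun m => hermiteTerm x u v (m, n))
      (Real.exp (2 * u * x - u ^ 2) * (((x - u) * v) ^ n / n.factorial)) := by
  have h := (hasSum_eval_iterate_A x u (X ^ n)).mul_right (v ^ n / n.factorial)
  rw [eval_pow, eval_X, mul_assoc, ← mul_div_assoc, ← mul_pow] at h
  refine h.congr_fun fun m => ?_
  simp only [hermiteTerm, H]
  ring

lemma hasSum_majorantTerm_fibre (x u v : ℝ) (n : ℕ) :
    HasSum (fun m => majorantTerm x u v (m, n))
      (Real.exp (1 * (|x| + |u|) ^ 2 - 1 * |x| ^ 2) *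
        (((|x| + |u|) * |v|) ^ n / n.factorial)) := by
  have h :=
    (hasSum_eval_iterate_twistDeriv 1 |x| |u| (X ^ n)).mul_right (|v| ^ n / n.factorial)
  rw [eval_pow, eval_X, mul_assoc, ← mul_div_assoc, ← mul_pow] at h
  refine h.congr_fun fun m => ?_
  simp only [majorantTerm]
  ring

end TwoIndexHermite

open TwoIndexHermite

theorem hmn_generating_function (x u v : ℝ) :
    Summable (fun p : ℕ × ℕ =>
      (H p.1 p.2).eval x * u ^ p.1 * v ^ p.2 /
        ((p.1.factorial : ℝ) * (p.2.factorial : ℝ))) ∧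
    ∑' p : ℕ × ℕ,
      (H p.1 p.2).eval x * u ^ p.1 * v ^ p.2 /
        ((p.1.factorial : ℝ) * (p.2.factorial : ℝ)) =
      Real.exp (-u ^ 2 + (2 * u + v) * x - u * v) := by
  have hexp (y : ℝ) : HasSum (fun n => y ^ n / n.factorial) (Real.exp y) :=
    Real.exp_eq_exp_ℝ ▸ NormedSpace.expSeries_div_hasSum_exp y
  have hsum :
      HasSum (hermiteTerm x u v) (Real.exp (2 * u * x - u ^ 2) * Real.exp ((x - u) * v)) :=
    hasSum_prod_of_norm_le_of_hasSum_fibres (norm_hermiteTerm_le x u v)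
      (hasSum_majorantTerm_fibre x u v) ((hexp _).summable.mul_left _)
      (hasSum_hermiteTerm_fibre x u v) ((hexp _).mul_left _)
  refine ⟨hsum.summable, hsum.tsum_eq.trans ?_⟩
  rw [← Real.exp_add]
  ring_nf
end

section
/- (Higher derivative formula) For all natural numbers r, n, ν with ν ≤ r and ν ≤ n, and all real x, the ν-th derivative of the polynomial H_{r,n} satisfies (d^ν/dx^ν) H_{r,n}(x) = r!·n! · Σ_{j=0}^{ν} α_{j,ν} · H_{r−ν+j, n−j}(x) / ((r−ν+j)!·(n−j)!). -/
open Polynomial Finset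

/-- The coefficients `α_{j,ν}`: `α_{0,ν} = 2^ν`, `α_{ν,ν} = 1`, and
`α_{j,ν} = 2·α_{j,ν−1} + α_{j−1,ν−1}` for `1 ≤ j < ν`. -/
def alpha : ℕ → ℕ → ℕ
  | 0, ν => 2 ^ ν
  | _ + 1, 0 => 1
  | j + 1, ν + 1 =>
      if j + 1 = ν + 1 then 1 else 2 * alpha (j + 1) ν + alpha j ν

/-! Normalise `h_{m,n} = H_{m,n} / (m! n!)`. The commutator identity `D ∘ A = A ∘ D + 2` gives
`D h_{m+1,n+1} = 2 h_{m,n+1} + h_{m+1,n}`, so `D` acts on the `h_{m,n}` as `2S + T` for the two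
commuting index shifts `S`, `T`. The coefficients of `(2S + T)^ν` obey the Pascal-type recurrence
defining `α_{j,ν}` (indeed `α_{j,ν} = (ν choose j) 2^(ν-j)`), and the formula follows by induction
on `ν`. -/

open scoped Nat

noncomputable def linearA : Module.End ℝ ℝ[X] where
  toFun := A
  map_add' p q := by simp only [A, derivative_add]; ring
  map_smul' c p := by simp only [A, derivative_smul, RingHom.id_apply, smul_sub, mul_smul_comm]

lemma iterate_A_add (m : ℕ) (p q : ℝ[X]) : A^[m] (p + q) = A^[m] p + A^[m] q :=
  iterate_map_add linearA m p q

lemma iterate_A_smul (m : ℕ) (c : ℝ) (p : ℝ[X]) : A^[m] (c • p) = c • A^[m] p := by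
  have h := map_smul (linearA ^ m) c p
  rw [Module.End.coe_pow] at h
  exact h

lemma derivative_A (p : ℝ[X]) : derivative (A p) = (2 : ℝ) • p + A (derivative p) := by
  simp only [A, derivative_sub, derivative_mul, derivative_X, derivative_ofNat,
    ofNat_smul_eq_nsmul, two_nsmul]
  ring

lemma derivative_iterate_A (m : ℕ) (p : ℝ[X]) :
    derivative (A^[m + 1] p) = (2 * (m + 1) : ℝ) • A^[m] p + A^[m + 1] (derivative p) := by
  induction m generalizing p with
  | zero => simp [derivative_A]
  | succ m ih =>
    rw [Function.iterate_succ_apply, ih, derivative_A, iterate_A_add, iterate_A_smul,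
      ← Function.iterate_succ_apply, ← Function.iterate_succ_apply A (m + 1)]
    push_cast
    module

lemma derivative_H (m n : ℕ) :
    derivative (H (m + 1) (n + 1)) =
      (2 * (m + 1) : ℝ) • H m (n + 1) + (n + 1 : ℝ) • H (m + 1) n := by
  rw [H, derivative_iterate_A, derivative_X_pow, ← smul_eq_C_mul, iterate_A_smul]
  push_cast
  rfl

noncomputable def scaledH (m n : ℕ) : ℝ[X] := (m ! * n ! : ℝ)⁻¹ • H m n

lemma factorial_mul_factorial_smul_scaledH (m n : ℕ) : (m ! * n ! : ℝ) • scaledH m n = H m n := by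
  rw [scaledH, smul_smul, mul_inv_cancel₀ (by positivity), one_smul]

lemma derivative_scaledH (m n : ℕ) :
    derivative (scaledH (m + 1) (n + 1)) = 2 • scaledH m (n + 1) + scaledH (m + 1) n := by
  rw [← ofNat_smul_eq_nsmul ℝ 2]
  simp only [scaledH, derivative_smul, derivative_H, smul_add, smul_smul, Nat.factorial_succ]
  push_cast
  congr 2 <;> field_simp

lemma alpha_self (ν : ℕ) : alpha ν ν = 1 := by
  cases ν <;> simp [alpha]

lemma alpha_succ_succ {j ν : ℕ} (hj : j < ν) :
    alpha (j + 1) (ν + 1) = 2 * alpha (j + 1) ν + alpha j ν := by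
  simp [alpha, hj.ne]

lemma sum_alpha_succ_nsmul {M : Type*} [AddCommMonoid M] (ν : ℕ) (f : ℕ → M) :
    ∑ j ∈ range (ν + 2), alpha j (ν + 1) • f j =
      2 • ∑ j ∈ range (ν + 1), alpha j ν • f j + ∑ j ∈ range (ν + 1), alpha j ν • f (j + 1) := by
  rw [sum_range_succ, sum_range_succ', sum_congr rfl fun j hj => by
    rw [alpha_succ_succ (mem_range.1 hj)]]
  rw [sum_range_succ' (fun j => alpha j ν • f j),
    sum_range_succ (fun j => alpha j ν • f (j + 1))]
  simp only [add_nsmul, nsmul_add, ← mul_nsmul', ← sum_nsmul, sum_add_distrib, alpha_self, alpha,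
    pow_succ', if_true, one_nsmul]
  abel

lemma iterate_derivative_scaledH (a b ν : ℕ) :
    derivative^[ν] (scaledH (a + ν) (b + ν)) =
      ∑ j ∈ range (ν + 1), alpha j ν • scaledH (a + j) (b + ν - j) := by
  induction ν generalizing a b with
  | zero => simp [alpha]
  | succ ν ih =>
    rw [Function.iterate_succ_apply, ← add_assoc, ← add_assoc, derivative_scaledH,
      iterate_map_add (derivative (R := ℝ)), iterate_derivative_smul, add_right_comm b, ih,
      add_right_comm a, ih, sum_alpha_succ_nsmul]
    congr 2
    funext j
    congr 2 <;> omega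

theorem hmn_higher_derivative (r n ν : ℕ) (hr : ν ≤ r) (hn : ν ≤ n) (x : ℝ) :
    (derivative^[ν] (H r n)).eval x =
      (r.factorial : ℝ) * (n.factorial : ℝ) *
        ∑ j ∈ range (ν + 1),
          (alpha j ν : ℝ) * (H (r - ν + j) (n - j)).eval x /
            (((r - ν + j).factorial : ℝ) * ((n - j).factorial : ℝ)) := by
  obtain ⟨a, rfl⟩ := Nat.exists_eq_add_of_le' hr
  obtain ⟨b, rfl⟩ := Nat.exists_eq_add_of_le' hn
  rw [← factorial_mul_factorial_smul_scaledH (a + ν) (b + ν), iterate_derivative_smul,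
    iterate_derivative_scaledH, eval_smul, eval_finsetSum, smul_eq_mul]
  congr 1
  refine sum_congr rfl fun j _ => ?_
  rw [Nat.add_sub_cancel, scaledH, eval_smul, eval_smul, nsmul_eq_mul, smul_eq_mul]
  field_simp
end

section
/- For all natural numbers m, r, n with n ≥ 1 and all real x ≠ 0, H_{m+r,n}(x) = m! · Σ_{k=0}^{m} ((−1)^k / k!) · (H_{m−k,n}(x) / (m−k)!) · f^{(k)}(x), where f^{(k)} denotes the k-th iterated derivative of the real function f(t) = t^{−n}·H_{r,n}(t) on ℝ \ {0}. -/
open Polynomial Finset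

/-! Because `A (p · f) = A p · f − p · f′`, iterating `A` on a product obeys a Leibniz rule,
`A^m (p f) = ∑ₖ C(m,k) (−1)^k A^{m−k} p · f^{(k)}`, valid on any open set where `f` is smooth.
On `ℝ ∖ {0}` the polynomial `H_{r,n}` factors as `X^n · (t^{−n} H_{r,n})`, and
`A^m H_{r,n} = H_{m+r,n}`; writing `C(m,k) = m! / (k! (m−k)!)` gives the formula. -/

theorem hasDerivAt_iteratedDeriv_of_contDiffOn {𝕜 F : Type*} [NontriviallyNormedField 𝕜]
    [NormedAddCommGroup F] [NormedSpace 𝕜 F] {f : 𝕜 → F} {U : Set 𝕜} (hU : IsOpen U)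
    (hf : ContDiffOn 𝕜 ⊤ f U) (k : ℕ) {t : 𝕜} (ht : t ∈ U) :
    HasDerivAt (iteratedDeriv k f) (iteratedDeriv (k + 1) f t) t := by
  have hwithin : DifferentiableAt 𝕜 (iteratedDerivWithin k f U) t :=
    (hf.differentiableOn_iteratedDerivWithin (WithTop.coe_lt_top _) hU.uniqueDiffOn t ht)
      |>.differentiableAt (hU.mem_nhds ht)
  rw [iteratedDeriv_succ]
  exact ((iteratedDerivWithin_of_isOpen hU).eventuallyEq_of_mem (hU.mem_nhds ht)
    |>.differentiableAt_iff.1 hwithin).hasDerivAt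

theorem eval_A (p : ℝ[X]) (t : ℝ) :
    (A p).eval t = 2 * t * p.eval t - (derivative p).eval t := by
  simp [A]

theorem eval_iterate_A_eq_sum {U : Set ℝ} (hU : IsOpen U) {f : ℝ → ℝ} (hf : ContDiffOn ℝ ⊤ f U)
    {p q : ℝ[X]} (hq : ∀ t ∈ U, q.eval t = p.eval t * f t) (m : ℕ) :
    ∀ t ∈ U, (A^[m] q).eval t = ∑ k ∈ range (m + 1),
      (m.choose k : ℝ) * ((-1) ^ k * (A^[m - k] p).eval t * iteratedDeriv k f t) := by
  induction m with
  | zero => simpa using hq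
  | succ m ih =>
    intro t ht
    have hsum : HasDerivAt (fun s ↦ ∑ k ∈ range (m + 1),
          (m.choose k : ℝ) * ((-1) ^ k * (A^[m - k] p).eval s * iteratedDeriv k f s))
        (∑ k ∈ range (m + 1), (m.choose k : ℝ) * ((-1) ^ k *
          ((derivative (A^[m - k] p)).eval t * iteratedDeriv k f t
            + (A^[m - k] p).eval t * iteratedDeriv (k + 1) f t))) t :=
      .fun_sum fun k _ ↦ ((((Polynomial.hasDerivAt _ t).const_mul _).mul
        (hasDerivAt_iteratedDeriv_of_contDiffOn hU hf k ht)).const_mul _).congr_deriv (by ring)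
    -- the derivative of `A^[m] q` at `t` only depends on its values on the neighbourhood `U`
    have hderiv := (Polynomial.deriv (A^[m] q) (x := t)).symm.trans <|
      (Filter.eventuallyEq_of_mem (hU.mem_nhds ht) ih).deriv_eq.trans hsum.deriv
    rw [Function.iterate_succ_apply', eval_A, hderiv, ih t ht,
      show m + 1 + 1 = m + 2 from rfl,
      sum_choose_succ_mul (fun i j ↦ (-1) ^ i * (A^[j] p).eval t * iteratedDeriv i f t),
      mul_sum, ← sum_sub_distrib, ← sum_add_distrib]
    refine sum_congr rfl fun k hk ↦ ?_
    rw [Nat.sub_add_comm (mem_range_succ_iff.1 hk), Function.iterate_succ_apply', eval_A]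
    ring

theorem contDiffOn_zpow_neg_mul_eval (n : ℕ) (p : ℝ[X]) :
    ContDiffOn ℝ ⊤ (fun t : ℝ ↦ t ^ (-(n : ℤ)) * p.eval t) {0}ᶜ := by
  simp only [zpow_neg, zpow_natCast]
  exact ((contDiff_id.pow n).contDiffOn.inv fun t ht ↦ pow_ne_zero n ht).mul
    (by simpa using (p.contDiff_aeval (R := ℝ) (𝕜 := ℝ) ⊤).contDiffOn)

theorem hmn_burchnall_general (m r n : ℕ) (x : ℝ) (hx : x ≠ 0) :
    (H (m + r) n).eval x =
      (m.factorial : ℝ) *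
        ∑ k ∈ range (m + 1),
          ((-1 : ℝ) ^ k / (k.factorial : ℝ)) *
            ((H (m - k) n).eval x / ((m - k).factorial : ℝ)) *
            iteratedDeriv k (fun t : ℝ => t ^ (-(n : ℤ)) * (H r n).eval t) x := by
  have hfactor : ∀ t ∈ ({0}ᶜ : Set ℝ),
      (H r n).eval t = (X ^ n : ℝ[X]).eval t * (t ^ (-(n : ℤ)) * (H r n).eval t) := by
    intro t ht
    rw [eval_pow, eval_X, zpow_neg, zpow_natCast, mul_inv_cancel_left₀ (pow_ne_zero n ht)]
  rw [H, Function.iterate_add_apply, ← H, eval_iterate_A_eq_sum isOpen_compl_singleton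
    (contDiffOn_zpow_neg_mul_eval n _) hfactor m x hx, mul_sum]
  refine sum_congr rfl fun k hk ↦ ?_
  rw [Nat.cast_choose ℝ (mem_range_succ_iff.1 hk)]
  simp only [H]
  field_simp

theorem hmn_burchnall (m r n : ℕ) (hn : 1 ≤ n) (x : ℝ) (hx : x ≠ 0) :
    (H (m + r) n).eval x =
      (m.factorial : ℝ) *
        ∑ k ∈ range (m + 1),
          ((-1 : ℝ) ^ k / (k.factorial : ℝ)) *
            ((H (m - k) n).eval x / ((m - k).factorial : ℝ)) *
            iteratedDeriv k (fun t : ℝ => t ^ (-(n : ℤ)) * (H r n).eval t) x :=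
  hmn_burchnall_general m r n x hx
end
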